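/- arXiv:2312.01976 — 2 statements merged into one kernel-verified Lean document; each statement's English description precedes it below -/
import Mathlib

section
/- (p-adic convergence of the Kummer series) Let r, q be coprime positive integers with 1/2 < r/q < 1 and p = kq+1 an odd prime. Set c_n = (−r/q)_n / ( (−2r/q)_n · n! ) ∈ ℚ_p. Then |c_n p^n|_p → 0 as n → ∞ (indeed ord_p(c_n p^n) ≥ n(p−2)/(p−1) − log_p n − 1), and consequently the series M(x) = Σ_{n=0}^{∞} c_n p^n x^n converges p-adically uniformly for x ∈ ℤ_p: for every ε > 0 there is N such that for all N' ≥ N and all x ∈ ℤ_p, |Σ_{n≥N'} c_n p^n x^n|_p < ε. Hence M defines a (continuous) function ℤ_p → ℚ_p. -/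
/-!
Write `(−a/q)_n = q^{−n} ∏_{j<n} (jq − a)`. For each `i ≥ 1` the residue `ρ` of `r/q` modulo `p^i`
satisfies `2ρ < p^i`, so the `j < n` with `p^i ∣ jq − 2r`, i.e. `j ≡ 2ρ`, are no more numerous than
those with `p^i ∣ jq − r`, i.e. `j ≡ ρ`. Summing over `i` gives `ord_p (−r/q)_n ≥ ord_p (−2r/q)_n`,
hence `|c_n p^n| ≤ |p^n / n!| ≤ p^{−n(p−2)/(p−1)}` by Legendre's formula. Coefficients bounded by a
geometric sequence of ratio `< 1` give uniform convergence on `ℤ_p`.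
-/

open Filter

/-- The limiting Kummer coefficient `c_n = (−r/q)_n / ((−2r/q)_n · n!)` in `ℚ_p`. -/
noncomputable def kummerCoeff (p : ℕ) [Fact p.Prime] (q r : ℕ) (n : ℕ) : ℚ_[p] :=
  (ascPochhammer ℚ_[p] n).eval (-(r : ℚ_[p]) / q) /
    ((ascPochhammer ℚ_[p] n).eval (-(2 * r : ℚ_[p]) / q) * (n.factorial : ℚ_[p]))

open Finset

theorem ascPochhammer_eval_neg_div {K : Type*} [Field K] {q : K} (hq : q ≠ 0) (a : K) (n : ℕ) :
    (ascPochhammer K n).eval (-a / q) = (∏ j ∈ range n, (j * q - a)) / q ^ n := by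
  induction n with
  | zero => simp
  | succ n ih =>
    have hlast : -a / q + n = (n * q - a) / q := by field_simp; ring
    rw [ascPochhammer_succ_eval, ih, hlast, div_mul_div_comm, prod_range_succ, pow_succ]

section Valuation

variable {p : ℕ} [Fact p.Prime] {ι : Type*} {s : Finset ι} {f g : ι → ℤ}

theorem sum_padicValInt_eq_sum_card_filter_pow_dvd (hf : ∀ j ∈ s, f j ≠ 0) {B : ℕ}
    (hB : ∀ j ∈ s, padicValInt p (f j) < B) :
    ∑ j ∈ s, padicValInt p (f j) = ∑ i ∈ Ico 1 B, #{j ∈ s | (p : ℤ) ^ i ∣ f j} := by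
  have hval : ∀ j ∈ s, padicValInt p (f j) = #{i ∈ Ico 1 B | (p : ℤ) ^ i ∣ f j} := by
    intro j hj
    have hfilter : {i ∈ Ico 1 B | (p : ℤ) ^ i ∣ f j} = Ico 1 (padicValInt p (f j) + 1) := by
      ext i
      simp only [mem_filter, mem_Ico, padicValInt_dvd_iff, hf j hj, false_or]
      have := hB j hj
      omega
    rw [hfilter, Nat.card_Ico, Nat.add_sub_cancel]
  simp only [sum_congr rfl hval, card_filter]
  exact sum_comm

theorem sum_padicValInt_le_of_card_filter_pow_dvd_le (hf : ∀ j ∈ s, f j ≠ 0)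
    (hg : ∀ j ∈ s, g j ≠ 0)
    (h : ∀ i ≠ 0, #{j ∈ s | (p : ℤ) ^ i ∣ g j} ≤ #{j ∈ s | (p : ℤ) ^ i ∣ f j}) :
    ∑ j ∈ s, padicValInt p (g j) ≤ ∑ j ∈ s, padicValInt p (f j) := by
  set B := 1 + ∑ j ∈ s, (padicValInt p (f j) + padicValInt p (g j))
  have hB : ∀ j ∈ s, padicValInt p (f j) + padicValInt p (g j) < B := fun j hj =>
    Nat.lt_one_add_iff.2 <|
      single_le_sum (f := fun j => padicValInt p (f j) + padicValInt p (g j)) (by simp) hj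
  rw [sum_padicValInt_eq_sum_card_filter_pow_dvd hf (B := B) (fun j hj => by linarith [hB j hj]),
    sum_padicValInt_eq_sum_card_filter_pow_dvd hg (B := B) (fun j hj => by linarith [hB j hj])]
  exact sum_le_sum fun i hi => h i (by rw [mem_Ico] at hi; omega)

theorem Padic.norm_intCast_eq_inv_pow_padicValInt {z : ℤ} (hz : z ≠ 0) :
    ‖(z : ℚ_[p])‖ = (p : ℝ)⁻¹ ^ padicValInt p z := by
  rw [norm_eq_zpow_neg_valuation (by exact_mod_cast hz), valuation_intCast, zpow_neg,
    zpow_natCast, inv_pow]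

theorem Padic.norm_prod_intCast_le_of_card_filter_pow_dvd_le (hf : ∀ j ∈ s, f j ≠ 0)
    (hg : ∀ j ∈ s, g j ≠ 0)
    (h : ∀ i ≠ 0, #{j ∈ s | (p : ℤ) ^ i ∣ g j} ≤ #{j ∈ s | (p : ℤ) ^ i ∣ f j}) :
    ‖∏ j ∈ s, (f j : ℚ_[p])‖ ≤ ‖∏ j ∈ s, (g j : ℚ_[p])‖ := by
  have hp : (1 : ℝ) ≤ p := by exact_mod_cast (Fact.out : p.Prime).one_le
  rw [norm_prod, norm_prod,
    prod_congr rfl fun j hj => norm_intCast_eq_inv_pow_padicValInt (hf j hj),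
    prod_congr rfl fun j hj => norm_intCast_eq_inv_pow_padicValInt (hg j hj),
    prod_pow_eq_pow_sum, prod_pow_eq_pow_sum]
  exact pow_le_pow_of_le_one (by positivity) (inv_le_one_of_one_le₀ hp)
    (sum_padicValInt_le_of_card_filter_pow_dvd_le hf hg h)

theorem Padic.norm_pow_div_factorial_le (n : ℕ) :
    ‖(p : ℚ_[p]) ^ n / n.factorial‖ ≤ (p : ℝ) ^ (-((n : ℝ) * (p - 2) / (p - 1))) := by
  have hp := (Fact.out : p.Prime)
  have hp1 : (1 : ℝ) < p := by exact_mod_cast hp.one_lt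
  have hlegendre : (padicValNat p n.factorial : ℝ) ≤ n / (p - 1) := by
    have h : (p - 1) * padicValNat p n.factorial ≤ n :=
      (sub_one_mul_padicValNat_factorial n).trans_le (Nat.sub_le _ _)
    have h' : ((p - 1 : ℕ) : ℝ) * padicValNat p n.factorial ≤ n := by exact_mod_cast h
    rw [Nat.cast_sub hp.one_le, Nat.cast_one] at h'
    rw [le_div_iff₀ (by linarith)]
    linarith
  rw [norm_div, norm_p_pow, norm_eq_zpow_neg_valuation (by exact_mod_cast n.factorial_ne_zero),
    valuation_natCast, ← zpow_sub₀ (by positivity), ← Real.rpow_intCast]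
  apply Real.rpow_le_rpow_of_exponent_le hp1.le
  have hsplit : (n : ℝ) * (p - 2) / (p - 1) = n - n / (p - 1) := by
    field_simp [show (p : ℝ) - 1 ≠ 0 by linarith]
    ring
  simp only [Int.cast_sub, Int.cast_neg, Int.cast_natCast, hsplit]
  linarith

end Valuation

section Counting

theorem Nat.count_modEq_le_of_mod_le {N a b : ℕ} (hN : 0 < N) (h : a % N ≤ b % N) (n : ℕ) :
    n.count (· ≡ b [MOD N]) ≤ n.count (· ≡ a [MOD N]) := by
  rw [Nat.count_modEq_card _ hN, Nat.count_modEq_card _ hN]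
  split_ifs <;> omega

theorem Int.natCast_dvd_mul_sub_iff_modEq {N q ρ j : ℕ} {a : ℤ} (hNq : IsCoprime (N : ℤ) q)
    (hρ : (N : ℤ) ∣ ρ * q - a) : (N : ℤ) ∣ j * q - a ↔ j ≡ ρ [MOD N] := by
  have hsub : (j * q - a : ℤ) = (j - ρ) * q + (ρ * q - a) := by ring
  rw [hsub, dvd_add_left hρ, Nat.ModEq.comm, ← Int.natCast_modEq_iff, Int.modEq_iff_dvd]
  exact ⟨hNq.dvd_of_dvd_mul_right, (·.mul_right _)⟩

theorem card_filter_dvd_mul_sub_two_mul_le {N q r ρ : ℕ} (hNq : IsCoprime (N : ℤ) q)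
    (hρ : (N : ℤ) ∣ ρ * q - r) (h2ρ : 2 * ρ < N) (n : ℕ) :
    #{j ∈ range n | (N : ℤ) ∣ ((j : ℕ) : ℤ) * q - 2 * r} ≤
      #{j ∈ range n | (N : ℤ) ∣ ((j : ℕ) : ℤ) * q - r} := by
  have h2 : (N : ℤ) ∣ ((2 * ρ : ℕ) : ℤ) * q - 2 * r := by
    simpa [mul_sub, mul_assoc] using hρ.mul_left 2
  simp_rw [Int.natCast_dvd_mul_sub_iff_modEq hNq hρ, Int.natCast_dvd_mul_sub_iff_modEq hNq h2,
    ← Nat.count_eq_card_filter_range]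
  exact Nat.count_modEq_le_of_mod_le (by omega)
    (by rw [Nat.mod_eq_of_lt (by omega), Nat.mod_eq_of_lt h2ρ]; omega) n

theorem exists_two_mul_lt_and_dvd_mul_sub {N q r m : ℕ} (hm : m * q + 1 = N) (hrq : r ≤ q)
    (h : q * N + 2 * r < 2 * r * N) : ∃ ρ : ℕ, 2 * ρ < N ∧ (N : ℤ) ∣ ρ * q - r := by
  subst hm
  have hrm : r * m ≤ m * q + 1 := by nlinarith
  have hlt : m * q + 1 < 2 * (r * m) := by nlinarith
  refine ⟨m * q + 1 - r * m, by omega, ⟨q - r, ?_⟩⟩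
  push_cast [hrm]
  ring

end Counting

section Kummer

variable {p q r k : ℕ}

theorem Nat.Prime.lt_of_eq_mul_add_one (hp : p.Prime) (hpk : p = k * q + 1) : q < p := by
  have hk : k ≠ 0 := by rintro rfl; simp [hp.ne_one] at hpk
  rw [hpk]
  nlinarith [Nat.one_le_iff_ne_zero.2 hk]

/-- Since `ρ q = (q - r) p ^ i + r` for the residue `ρ` of `r / q` modulo `p ^ i`, this says
`2 ρ < p ^ i`. -/
theorem mul_pow_add_two_mul_lt (hp : p.Prime) (hpk : p = k * q + 1) (hhalf : q < 2 * r)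
    (hlt : r < q) {i : ℕ} (hi : i ≠ 0) : q * p ^ i + 2 * r < 2 * r * p ^ i := by
  have hqp := hp.lt_of_eq_mul_add_one hpk
  have hbase : q * p + 2 * r < 2 * r * p := by
    rcases Nat.lt_or_ge (q + 1) (2 * r) with hgap | hgap
    · nlinarith
    · -- `p = q + 1 = 2r` would be an even prime.
      have hk1 : k ≠ 1 := by
        rintro rfl
        have := (hp.even_iff).1 ⟨r, by omega⟩
        omega
      have hk2 : 2 ≤ k := Nat.two_le_iff k |>.2 ⟨by rintro rfl; omega, hk1⟩
      have : 2 * q + 1 ≤ p := by rw [hpk]; nlinarith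
      nlinarith
  have hpi : p ≤ p ^ i := Nat.le_self_pow hi p
  nlinarith

theorem exists_two_mul_lt_pow_and_dvd_mul_sub (hp : p.Prime) (hpk : p = k * q + 1)
    (hhalf : q < 2 * r) (hlt : r < q) {i : ℕ} (hi : i ≠ 0) :
    ∃ ρ : ℕ, 2 * ρ < p ^ i ∧ ((p ^ i : ℕ) : ℤ) ∣ ρ * q - r := by
  obtain ⟨m, hm⟩ : q ∣ p ^ i - 1 :=
    (Dvd.intro_left k (by omega : k * q = p - 1)).trans (Nat.sub_one_dvd_pow_sub_one p i)
  exact exists_two_mul_lt_and_dvd_mul_sub (m := m)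
    (by have := Nat.one_le_pow i p hp.pos; rw [mul_comm]; omega) hlt.le
    (mul_pow_add_two_mul_lt hp hpk hhalf hlt hi)

theorem card_filter_pow_dvd_mul_sub_two_mul_le (hp : p.Prime) (hpk : p = k * q + 1)
    (hhalf : q < 2 * r) (hlt : r < q) (n : ℕ) {i : ℕ} (hi : i ≠ 0) :
    #{j ∈ range n | (p : ℤ) ^ i ∣ ((j : ℕ) : ℤ) * q - 2 * r} ≤
      #{j ∈ range n | (p : ℤ) ^ i ∣ ((j : ℕ) : ℤ) * q - r} := by
  obtain ⟨ρ, h2ρ, hρ⟩ := exists_two_mul_lt_pow_and_dvd_mul_sub hp hpk hhalf hlt hi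
  have hcop : IsCoprime ((p ^ i : ℕ) : ℤ) q := by
    refine Nat.isCoprime_iff_coprime.2 (Nat.Coprime.pow_left _ ?_)
    exact hp.coprime_iff_not_dvd.2
      (Nat.not_dvd_of_pos_of_lt (by omega) (hp.lt_of_eq_mul_add_one hpk))
  exact_mod_cast card_filter_dvd_mul_sub_two_mul_le hcop hρ h2ρ n

theorem norm_ascPochhammer_eval_neg_div_le [Fact p.Prime] (hpk : p = k * q + 1)
    (hhalf : q < 2 * r) (hlt : r < q) (n : ℕ) :
    ‖(ascPochhammer ℚ_[p] n).eval (-(r : ℚ_[p]) / q)‖ ≤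
      ‖(ascPochhammer ℚ_[p] n).eval (-(2 * r : ℚ_[p]) / q)‖ := by
  have hq : (q : ℚ_[p]) ≠ 0 := by exact_mod_cast (by omega : q ≠ 0)
  rw [ascPochhammer_eval_neg_div hq, ascPochhammer_eval_neg_div hq, norm_div, norm_div]
  gcongr
  have hprod := Padic.norm_prod_intCast_le_of_card_filter_pow_dvd_le (p := p) (s := range n)
    (f := fun j => (j : ℤ) * q - r) (g := fun j => (j : ℤ) * q - 2 * r) ?_ ?_
    fun i hi => card_filter_pow_dvd_mul_sub_two_mul_le Fact.out hpk hhalf hlt n hi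
  · push_cast at hprod
    exact hprod
  · intro j _
    rcases j with _ | j <;> push_cast <;> nlinarith
  · intro j _
    rcases j with _ | _ | j <;> push_cast <;> nlinarith

theorem norm_kummerCoeff_le [Fact p.Prime] (hpk : p = k * q + 1) (hhalf : q < 2 * r)
    (hlt : r < q) (n : ℕ) : ‖kummerCoeff p q r n‖ ≤ ‖(n.factorial : ℚ_[p])‖⁻¹ := by
  rw [kummerCoeff, norm_div, norm_mul, ← div_div, inv_eq_one_div]
  exact div_le_div_of_nonneg_right
    (div_le_one_of_le₀ (norm_ascPochhammer_eval_neg_div_le hpk hhalf hlt n) (norm_nonneg _))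
    (norm_nonneg _)

end Kummer

section GeometricBound

variable {𝕜 : Type*} [NormedField 𝕜] {a : ℕ → 𝕜} {C : ℝ}

theorem norm_mul_pow_le_of_norm_le_one (ha : ∀ n, ‖a n‖ ≤ C ^ n) {x : 𝕜} (hx : ‖x‖ ≤ 1)
    (n : ℕ) : ‖a n * x ^ n‖ ≤ C ^ n := by
  rw [norm_mul, norm_pow]
  exact (mul_le_of_le_one_right (norm_nonneg _) (pow_le_one₀ (norm_nonneg _) hx)).trans (ha n)

variable (hC0 : 0 ≤ C) (hC1 : C < 1)
include hC0 hC1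

theorem summable_mul_pow_of_norm_le_geometric [CompleteSpace 𝕜] (ha : ∀ n, ‖a n‖ ≤ C ^ n)
    {x : 𝕜} (hx : ‖x‖ ≤ 1) :
    Summable fun n => a n * x ^ n :=
  .of_norm_bounded (summable_geometric_of_lt_one hC0 hC1) (norm_mul_pow_le_of_norm_le_one ha hx)

theorem norm_tsum_tail_le_of_norm_le_geometric (ha : ∀ n, ‖a n‖ ≤ C ^ n) {x : 𝕜} (hx : ‖x‖ ≤ 1)
    (N : ℕ) : ‖∑' n, if N ≤ n then a n * x ^ n else 0‖ ≤ C ^ N / (1 - C) := by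
  have htail : HasSum (fun n => if N ≤ n then C ^ n else 0) (C ^ N / (1 - C)) := by
    rw [← hasSum_nat_add_iff' N, sum_eq_zero fun i hi => if_neg (not_le.2 (mem_range.1 hi)),
      sub_zero]
    simpa [pow_add, mul_comm, div_eq_mul_inv] using
      (hasSum_geometric_of_lt_one hC0 hC1).mul_left (C ^ N)
  refine tsum_of_norm_bounded htail fun n => ?_
  split_ifs
  · exact norm_mul_pow_le_of_norm_le_one ha hx n
  · simp

theorem exists_forall_norm_tsum_tail_lt (ha : ∀ n, ‖a n‖ ≤ C ^ n) {ε : ℝ} (hε : 0 < ε) :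
    ∃ N : ℕ, ∀ N' ≥ N, ∀ x : 𝕜, ‖x‖ ≤ 1 →
      ‖∑' n, if N' ≤ n then a n * x ^ n else 0‖ < ε := by
  have hlim : Tendsto (fun N : ℕ => C ^ N / (1 - C)) atTop (nhds 0) := by
    simpa using (tendsto_pow_atTop_nhds_zero_of_lt_one hC0 hC1).div_const (1 - C)
  obtain ⟨N, hN⟩ := (hlim.eventually (gt_mem_nhds hε)).exists
  refine ⟨N, fun N' hN' x hx => ?_⟩
  calc ‖∑' n, if N' ≤ n then a n * x ^ n else 0‖ ≤ C ^ N' / (1 - C) :=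
        norm_tsum_tail_le_of_norm_le_geometric hC0 hC1 ha hx N'
    _ ≤ C ^ N / (1 - C) :=
        div_le_div_of_nonneg_right (pow_le_pow_of_le_one hC0 hC1.le hN') (by linarith)
    _ < ε := hN

theorem continuousOn_tsum_mul_pow_of_norm_le_geometric [CompleteSpace 𝕜]
    (ha : ∀ n, ‖a n‖ ≤ C ^ n) :
    ContinuousOn (fun x : 𝕜 => ∑' n, a n * x ^ n) (Metric.closedBall 0 1) :=
  continuousOn_tsum (fun n => (continuous_const.mul (continuous_pow n)).continuousOn)
    (summable_geometric_of_lt_one hC0 hC1)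
    fun n _ hx => norm_mul_pow_le_of_norm_le_one ha (mem_closedBall_zero_iff.1 hx) n

end GeometricBound

theorem kummer_series_padic_convergence_general
    (p q r k : ℕ) [Fact p.Prime]
    (hhalf : q < 2 * r) (hlt : r < q)
    (hp : p = k * q + 1) :
    (∀ n : ℕ, ‖kummerCoeff p q r n * (p : ℚ_[p]) ^ n‖ ≤
        (p : ℝ) ^ (-((n : ℝ) * ((p : ℝ) - 2) / ((p : ℝ) - 1) - Real.logb p n - 1))) ∧
    Tendsto (fun n : ℕ => ‖kummerCoeff p q r n * (p : ℚ_[p]) ^ n‖) atTop (nhds 0) ∧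
    (∀ x : ℤ_[p], Summable (fun n : ℕ => kummerCoeff p q r n * (p : ℚ_[p]) ^ n * (x : ℚ_[p]) ^ n)) ∧
    (∀ ε : ℝ, 0 < ε → ∃ N : ℕ, ∀ N' : ℕ, N ≤ N' → ∀ x : ℤ_[p],
      ‖∑' n : ℕ, (if N' ≤ n then kummerCoeff p q r n * (p : ℚ_[p]) ^ n * (x : ℚ_[p]) ^ n else 0)‖ < ε) ∧
    Continuous (fun x : ℤ_[p] => ∑' n : ℕ, kummerCoeff p q r n * (p : ℚ_[p]) ^ n * (x : ℚ_[p]) ^ n) := by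
  have hp3 : (3 : ℝ) < p := by
    have := (Fact.out : p.Prime).lt_of_eq_mul_add_one hp
    exact_mod_cast (by omega : 3 < p)
  have hbound (n : ℕ) : ‖kummerCoeff p q r n * (p : ℚ_[p]) ^ n‖ ≤
      (p : ℝ) ^ (-((n : ℝ) * ((p : ℝ) - 2) / ((p : ℝ) - 1))) :=
    calc ‖kummerCoeff p q r n * (p : ℚ_[p]) ^ n‖
        ≤ ‖(n.factorial : ℚ_[p])‖⁻¹ * ‖(p : ℚ_[p]) ^ n‖ := by
          rw [norm_mul]; gcongr; exact norm_kummerCoeff_le hp hhalf hlt n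
      _ = ‖(p : ℚ_[p]) ^ n / n.factorial‖ := by rw [norm_div, div_eq_inv_mul]
      _ ≤ _ := Padic.norm_pow_div_factorial_le n
  set C : ℝ := (p : ℝ) ^ (-(((p : ℝ) - 2) / ((p : ℝ) - 1)))
  have hgeom (n : ℕ) : ‖kummerCoeff p q r n * (p : ℚ_[p]) ^ n‖ ≤ C ^ n := by
    rw [← Real.rpow_natCast, ← Real.rpow_mul (by positivity)]
    convert hbound n using 2
    ring
  have hC0 : 0 ≤ C := by positivity
  have hC1 : C < 1 :=
    Real.rpow_lt_one_of_one_lt_of_neg (by linarith) (neg_neg_of_pos (by apply div_pos <;> linarith))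
  have hx (x : ℤ_[p]) : ‖(x : ℚ_[p])‖ ≤ 1 := x.norm_le_one
  refine ⟨fun n => (hbound n).trans (Real.rpow_le_rpow_of_exponent_le (by linarith) ?_),
    squeeze_zero (fun _ => norm_nonneg _) hgeom (tendsto_pow_atTop_nhds_zero_of_lt_one hC0 hC1),
    fun x => summable_mul_pow_of_norm_le_geometric hC0 hC1 hgeom (hx x),
    fun ε hε => ?_,
    (continuousOn_tsum_mul_pow_of_norm_le_geometric hC0 hC1 hgeom).comp_continuous
      continuous_subtype_val fun x => mem_closedBall_zero_iff.2 (hx x)⟩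
  · have hlog : 0 ≤ Real.logb p n :=
      div_nonneg (Real.log_natCast_nonneg n) (Real.log_natCast_nonneg p)
    linarith
  · obtain ⟨N, hN⟩ := exists_forall_norm_tsum_tail_lt hC0 hC1 hgeom hε
    exact ⟨N, fun N' hN' x => hN N' hN' x (hx x)⟩

/-- **`p`-adic convergence of the Kummer series.**
`|c_n p^n|_p → 0` (with the explicit bound `ord_p(c_n p^n) ≥ n(p−2)/(p−1) − log_p n − 1`,
i.e. `‖c_n p^n‖ ≤ p^{-(n(p−2)/(p−1) − log_p n − 1)}`), the series
`M(x) = Σ c_n p^n x^n` is summable for every `x ∈ ℤ_p`, its tails are uniformly small on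
`ℤ_p`, and `M` defines a continuous function `ℤ_p → ℚ_p`. -/
theorem kummer_series_padic_convergence
    (p q r k : ℕ) [Fact p.Prime] (hodd : p ≠ 2)
    (hcop : Nat.Coprime r q) (hhalf : q < 2 * r) (hlt : r < q)
    (hk : 0 < k) (hp : p = k * q + 1) :
    (∀ n : ℕ, ‖kummerCoeff p q r n * (p : ℚ_[p]) ^ n‖ ≤
        (p : ℝ) ^ (-((n : ℝ) * ((p : ℝ) - 2) / ((p : ℝ) - 1) - Real.logb p n - 1))) ∧
    Tendsto (fun n : ℕ => ‖kummerCoeff p q r n * (p : ℚ_[p]) ^ n‖) atTop (nhds 0) ∧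
    (∀ x : ℤ_[p], Summable (fun n : ℕ => kummerCoeff p q r n * (p : ℚ_[p]) ^ n * (x : ℚ_[p]) ^ n)) ∧
    (∀ ε : ℝ, 0 < ε → ∃ N : ℕ, ∀ N' : ℕ, N ≤ N' → ∀ x : ℤ_[p],
      ‖∑' n : ℕ, (if N' ≤ n then kummerCoeff p q r n * (p : ℚ_[p]) ^ n * (x : ℚ_[p]) ^ n else 0)‖ < ε) ∧
    Continuous (fun x : ℤ_[p] => ∑' n : ℕ, kummerCoeff p q r n * (p : ℚ_[p]) ^ n * (x : ℚ_[p]) ^ n) :=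
  kummer_series_padic_convergence_general p q r k hhalf hlt hp
end

section
/- (Bethe ansatz and Lagrangian intersection, n = 2) Let F be a field of characteristic zero (e.g. ℂ) and let p, κ, λ_1, λ_2, z_1, z_2, t ∈ F with z_1 ≠ z_2, t ≠ z_1, t ≠ z_2. Suppose t satisfies the Bethe ansatz equation p(λ_2−λ_1) − κ/(t−z_1) − κ/(t−z_2) = 0. Define m_1 = pλ_1 + κ/(z_1−z_2) + κ/(t−z_1) and m_2 = pλ_1 + κ/(z_2−z_1) + κ/(t−z_2). Then m_1 + m_2 = p(λ_1+λ_2) and m_1^2 + m_2^2 − 2κ^2/(z_1−z_2)^2 = p^2(λ_1^2+λ_2^2). -/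
/-- **Bethe ansatz and Lagrangian intersection, n = 2.**
If `t` solves the Bethe ansatz equation for the `n = 2` master function, then the
Gaudin eigenvalues `m₁, m₂` satisfy the two equations cutting out the intersection of
the Lagrangian submanifolds of the classical Calogero–Moser system. -/
theorem bethe_lagrangian_intersection_n2
    (F : Type*) [Field F] [CharZero F]
    (p κ lam₁ lam₂ z₁ z₂ t : F)
    (hz : z₁ ≠ z₂) (ht₁ : t ≠ z₁) (ht₂ : t ≠ z₂)
    (hBethe : p * (lam₂ - lam₁) - κ / (t - z₁) - κ / (t - z₂) = 0)
    (m₁ m₂ : F)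
    (hm₁ : m₁ = p * lam₁ + κ / (z₁ - z₂) + κ / (t - z₁))
    (hm₂ : m₂ = p * lam₁ + κ / (z₂ - z₁) + κ / (t - z₂)) :
    m₁ + m₂ = p * (lam₁ + lam₂) ∧
      m₁ ^ 2 + m₂ ^ 2 - 2 * κ ^ 2 / (z₁ - z₂) ^ 2 = p ^ 2 * (lam₁ ^ 2 + lam₂ ^ 2) := by
  have hz' : z₁ - z₂ ≠ 0 := sub_ne_zero.mpr hz
  have hz'' : z₂ - z₁ ≠ 0 := sub_ne_zero.mpr hz.symm
  have h1 : t - z₁ ≠ 0 := sub_ne_zero.mpr ht₁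
  have h2 : t - z₂ ≠ 0 := sub_ne_zero.mpr ht₂
  set a := κ / (t - z₁) with ha
  set b := κ / (t - z₂) with hb
  set c := κ / (z₁ - z₂) with hc
  have hab : p * (lam₂ - lam₁) = a + b := by linear_combination hBethe
  have hkey : c * (a - b) = a * b := by
    rw [ha, hb, hc]; field_simp; ring
  have hc' : κ / (z₂ - z₁) = -c := by
    rw [hc, ← neg_sub z₁ z₂, div_neg]
  have hc2 : c ^ 2 = κ ^ 2 / (z₁ - z₂) ^ 2 := by
    rw [hc, div_pow]
  rw [hc'] at hm₂
  subst hm₁ hm₂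
  constructor
  · linear_combination -hab
  · linear_combination -(p * lam₁ + p * lam₂ + a + b) * hab + 2 * hkey + 2 * hc2
end
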